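/- (Phase transition for δ > 0.) Let ε > 0, 0 < δ ≤ 1, and set ρ = δ/(e^ε − 1). Let m be a distribution on V with prefix sums s⁰, and for t ∈ ℕ let s^t denote the prefix sums of T_{ε,δ}^t(m). Fix 1 ≤ k ≤ q and set τ_k = ⌊max{ln((1/(e^ε + 1) + ρ)/(s⁰_k + ρ))/ε + 1, 0}⌋. Then s^t_k ≤ 1/(e^ε + 1) for all 0 ≤ t ≤ τ_k − 1, and s^t_k ≥ 1/(e^ε + 1) for all t ≥ τ_k. -/
import Mathlib


open Finset

/-- Prefix sum `s_k = p_1 + ⋯ + p_k` (0-indexed internally: sum of entries with index `< k`). -/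
noncomputable def prefixSum (q : ℕ) (p : Fin q → ℝ) (k : ℕ) : ℝ :=
  ∑ i ∈ Finset.univ.filter (fun i : Fin q => (i : ℕ) < k), p i

/-- `p` is a probability distribution on `V = {1, …, q}`. -/
def IsDist (q : ℕ) (p : Fin q → ℝ) : Prop :=
  (∀ k, 0 ≤ p k) ∧ ∑ k, p k = 1

/-- The modified prefix sums `s'_k` defining the operator `T_{ε,δ}`:
`s'_0 = 0` and `s'_k = min {1, min {e^ε s_k, 1 - e^{-ε} (1 - s_k)} + δ}` for `k ≥ 1`. -/
noncomputable def sPrime (ε δ : ℝ) (q : ℕ) (p : Fin q → ℝ) (k : ℕ) : ℝ :=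
  if k = 0 then 0
  else min 1 (min (Real.exp ε * prefixSum q p k)
      (1 - Real.exp (-ε) * (1 - prefixSum q p k)) + δ)

/-- The operator `T_{ε,δ}`: `(T_{ε,δ} p)_k = s'_k - s'_{k-1}`. -/
noncomputable def Tmap (ε δ : ℝ) (q : ℕ) (p : Fin q → ℝ) : Fin q → ℝ :=
  fun k => sPrime ε δ q p ((k : ℕ) + 1) - sPrime ε δ q p (k : ℕ)

/-- `P` and `Q` are `(ε,δ)`-close: for every `S ⊆ V`,
`P(S) ≤ e^ε Q(S) + δ` and `Q(S) ≤ e^ε P(S) + δ`. -/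
def Close (ε δ : ℝ) (q : ℕ) (P Q : Fin q → ℝ) : Prop :=
  ∀ S : Finset (Fin q),
    (∑ k ∈ S, P k) ≤ Real.exp ε * (∑ k ∈ S, Q k) + δ ∧
    (∑ k ∈ S, Q k) ≤ Real.exp ε * (∑ k ∈ S, P k) + δ

/-- Dominance ordering: `x ⪯ y` iff every prefix sum of `x` is at most that of `y`. -/
def Dom (q : ℕ) (x y : Fin q → ℝ) : Prop :=
  ∀ k : ℕ, k ≤ q → prefixSum q x k ≤ prefixSum q y k

lemma prefixSum_zero (q : ℕ) (x : Fin q → ℝ) : prefixSum q x 0 = 0 := by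
  unfold prefixSum; simp

lemma prefixSum_succ (q n : ℕ) (hn : n < q) (x : Fin q → ℝ) :
    prefixSum q x (n+1) = prefixSum q x n + x ⟨n, hn⟩ := by
  unfold prefixSum
  have h : (univ.filter fun i : Fin q => (i:ℕ) < n+1)
      = insert ⟨n, hn⟩ (univ.filter fun i : Fin q => (i:ℕ) < n) := by
    ext i
    simp [Fin.ext_iff]
    omega
  rw [h, Finset.sum_insert (by simp)]
  ring

lemma prefixSum_Tmap (ε δ : ℝ) (q : ℕ) (p : Fin q → ℝ) :
    ∀ n, n ≤ q → prefixSum q (Tmap ε δ q p) n = sPrime ε δ q p n := by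
  intro n
  induction n with
  | zero => intro _; simp [prefixSum_zero, sPrime]
  | succ n ih =>
    intro hn
    rw [prefixSum_succ q n (by omega), ih (by omega)]
    simp only [Tmap]
    ring

lemma seq_key (ε δ : ℝ) (hε : 0 < ε) (hδ0 : 0 < δ)
    (ρ : ℝ) (hρ : ρ = δ / (Real.exp ε - 1))
    (u : ℕ → ℝ)
    (hrec : ∀ t, u (t+1) = min 1 (min (Real.exp ε * u t)
      (1 - Real.exp (-ε) * (1 - u t)) + δ)) :
    (∀ t : ℕ, u t ≤ Real.exp (ε * t) * (u 0 + ρ) - ρ) ∧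
    (∀ t : ℕ, min (1 / (Real.exp ε + 1)) (Real.exp (ε * t) * (u 0 + ρ) - ρ) ≤ u t) := by
  set E := Real.exp ε with hE_def
  have hE : 1 < E := by
    have := Real.add_one_le_exp ε
    simp only [hE_def]; linarith
  have hE0 : 0 < E := by linarith
  have hρ0 : 0 < ρ := by rw [hρ]; exact div_pos hδ0 (by linarith)
  have hEm1 : E - 1 ≠ 0 := by linarith
  have hEρ : E * ρ = ρ + δ := by
    rw [hρ]; field_simp; ring
  have hinv : Real.exp (-ε) = E⁻¹ := Real.exp_neg ε
  have hI : E⁻¹ * E = 1 := inv_mul_cancel₀ (by linarith)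
  have hI0 : 0 < E⁻¹ := by positivity
  set θ : ℝ := 1 / (E + 1) with hθ_def
  have hθE : θ * (E + 1) = 1 := by
    rw [hθ_def]; field_simp
  have hθ0 : 0 < θ := by rw [hθ_def]; positivity
  have hθ1 : θ < 1 := by nlinarith
  have hXsucc : ∀ t : ℕ, Real.exp (ε * ((t:ℝ)+1)) * (u 0 + ρ) - ρ
      = E * (Real.exp (ε * t) * (u 0 + ρ) - ρ) + δ := by
    intro t
    have h : Real.exp (ε * ((t:ℝ)+1)) = Real.exp (ε * t) * E := by
      rw [hE_def, ← Real.exp_add]; ring_nf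
    rw [h]; nlinarith [hEρ]
  have hFub : ∀ t, u (t+1) ≤ E * u t + δ := by
    intro t
    rw [hrec t]
    calc min 1 (min (E * u t) (1 - Real.exp (-ε) * (1 - u t)) + δ)
        ≤ min (E * u t) (1 - Real.exp (-ε) * (1 - u t)) + δ := min_le_right _ _
      _ ≤ E * u t + δ := by gcongr; exact min_le_left _ _
  have hFge : ∀ t, θ ≤ u t → θ ≤ u (t+1) := by
    intro t hs
    rw [hrec t]
    refine le_min (by linarith) ?_
    have h1 : θ ≤ E * u t := by nlinarith
    have h2 : θ ≤ 1 - Real.exp (-ε) * (1 - u t) := by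
      rw [hinv]
      nlinarith [mul_le_mul_of_nonneg_left hs (le_of_lt hI0)]
    have := le_min h1 h2
    linarith
  have hFeq : ∀ t, u t ≤ θ → u (t+1) = min 1 (E * u t + δ) := by
    intro t hs
    rw [hrec t]
    congr 1
    have : E * u t ≤ 1 - Real.exp (-ε) * (1 - u t) := by
      rw [hinv]
      nlinarith [mul_le_mul_of_nonneg_left hs hE0.le, hI]
    rw [min_eq_left this]
  constructor
  · intro t
    induction t with
    | zero => simp
    | succ t ih =>
      have h1 := hFub t
      have h2 : E * u t ≤ E * (Real.exp (ε * t) * (u 0 + ρ) - ρ) :=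
        mul_le_mul_of_nonneg_left ih hE0.le
      have h3 := hXsucc t
      push_cast
      linarith
  · intro t
    induction t with
    | zero => simp
    | succ t ih =>
      push_cast
      rw [hXsucc t]
      set Y : ℝ := Real.exp (ε * t) * (u 0 + ρ) - ρ with hY_def
      rcases le_or_gt θ (u t) with h | h
      · exact le_trans (min_le_left _ _) (hFge t h)
      · have hYle : Y ≤ u t := by
          rcases le_or_gt θ Y with h2 | h2
          · have : min θ Y = θ := min_eq_left h2
            rw [this] at ih; linarith
          · have : min θ Y = Y := min_eq_right h2.le
            rw [this] at ih; exact ih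
        rw [hFeq t h.le]
        calc min θ (E * Y + δ) ≤ min 1 (E * Y + δ) := by gcongr
          _ ≤ min 1 (E * u t + δ) := by gcongr

/-- phase transition for δ > 0: with `ρ = δ/(e^ε − 1)`, `s^t` the prefix
sums of `T_{ε,δ}^t(m)`, and `τ_k = ⌊max {ln((1/(e^ε + 1) + ρ)/(s⁰_k + ρ))/ε + 1, 0}⌋`,
we have `s^t_k ≤ 1/(e^ε + 1)` for `0 ≤ t ≤ τ_k − 1` and `s^t_k ≥ 1/(e^ε + 1)` for
`t ≥ τ_k`. -/
theorem phase_transition_delta_pos (q : ℕ) (hq : 1 ≤ q) (ε δ : ℝ) (hε : 0 < ε)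
    (hδ0 : 0 < δ) (hδ1 : δ ≤ 1)
    (m : Fin q → ℝ) (hm : IsDist q m) (k : ℕ) (hk1 : 1 ≤ k) (hkq : k ≤ q)
    (ρ : ℝ) (hρ : ρ = δ / (Real.exp ε - 1))
    (τ : ℕ)
    (hτ : τ = ⌊max (Real.log ((1 / (Real.exp ε + 1) + ρ) / (prefixSum q m k + ρ)) / ε + 1)
      0⌋₊) :
    (∀ t : ℕ, t + 1 ≤ τ →
      prefixSum q ((Tmap ε δ q)^[t] m) k ≤ 1 / (Real.exp ε + 1)) ∧
    (∀ t : ℕ, τ ≤ t →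
      1 / (Real.exp ε + 1) ≤ prefixSum q ((Tmap ε δ q)^[t] m) k) := by
  have hknz : k ≠ 0 := by omega
  have hE : 1 < Real.exp ε := by
    have := Real.add_one_le_exp ε; linarith
  have hρ0 : 0 < ρ := by rw [hρ]; exact div_pos hδ0 (by linarith)
  have hs0 : 0 ≤ prefixSum q m k :=
    Finset.sum_nonneg (fun i _ => hm.1 i)
  have hsρ : 0 < prefixSum q m k + ρ := by linarith
  have hθρ : (0:ℝ) < 1 / (Real.exp ε + 1) + ρ := by positivity
  have hratio : (0:ℝ) < (1 / (Real.exp ε + 1) + ρ) / (prefixSum q m k + ρ) :=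
    div_pos hθρ hsρ
  set L : ℝ := Real.log ((1 / (Real.exp ε + 1) + ρ) / (prefixSum q m k + ρ)) with hL_def
  have hrec : ∀ t, (fun t => prefixSum q ((Tmap ε δ q)^[t] m) k) (t+1)
      = min 1 (min (Real.exp ε * (fun t => prefixSum q ((Tmap ε δ q)^[t] m) k) t)
        (1 - Real.exp (-ε) * (1 - (fun t => prefixSum q ((Tmap ε δ q)^[t] m) k) t)) + δ) := by
    intro t
    simp only [Function.iterate_succ_apply']
    rw [prefixSum_Tmap ε δ q _ k hkq]
    simp [sPrime, hknz]
  obtain ⟨hub, hlb⟩ := seq_key ε δ hε hδ0 ρ hρ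
    (fun t => prefixSum q ((Tmap ε δ q)^[t] m) k) hrec
  simp only [Function.iterate_zero_apply] at hub hlb
  constructor
  · intro t ht
    have h1 : ((t:ℝ) + 1) ≤ max (L / ε + 1) 0 := by
      calc ((t:ℝ) + 1) = ((t + 1 : ℕ) : ℝ) := by push_cast; ring
        _ ≤ (τ : ℝ) := by exact_mod_cast ht
        _ ≤ max (L / ε + 1) 0 := by
            rw [hτ]; exact Nat.floor_le (le_max_right _ _)
    have h2 : (t:ℝ) + 1 ≤ L / ε + 1 := by
      rcases max_le_iff.1 (le_refl (max (L / ε + 1) 0)) with ⟨_, _⟩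
      rcases le_max_iff.1 h1 with h | h
      · exact h
      · exfalso; have : (0:ℝ) ≤ t := Nat.cast_nonneg t; linarith
    have h3 : ε * t ≤ L := by
      have : (t:ℝ) ≤ L / ε := by linarith
      have := (le_div_iff₀ hε).1 this
      linarith
    have h4 : Real.exp (ε * t) ≤ (1 / (Real.exp ε + 1) + ρ) / (prefixSum q m k + ρ) := by
      rw [← Real.exp_log hratio]
      exact Real.exp_le_exp.2 h3
    have h5 : Real.exp (ε * t) * (prefixSum q m k + ρ) ≤ 1 / (Real.exp ε + 1) + ρ :=
      (le_div_iff₀ hsρ).1 h4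
    have := hub t
    linarith
  · intro t ht
    have h1 : max (L / ε + 1) 0 < (t:ℝ) + 1 := by
      calc max (L / ε + 1) 0 < (τ : ℝ) + 1 := by
            rw [hτ]; push_cast; exact Nat.lt_floor_add_one _
        _ ≤ (t:ℝ) + 1 := by
            have : (τ:ℝ) ≤ (t:ℝ) := by exact_mod_cast ht
            linarith
    have h2 : L / ε + 1 < (t:ℝ) + 1 := lt_of_le_of_lt (le_max_left _ _) h1
    have h3 : L < ε * t := by
      have : L / ε < (t:ℝ) := by linarith
      have := (div_lt_iff₀ hε).1 this
      linarith
    have h4 : (1 / (Real.exp ε + 1) + ρ) / (prefixSum q m k + ρ) < Real.exp (ε * t) := by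
      rw [← Real.exp_log hratio]
      exact Real.exp_lt_exp.2 h3
    have h5 : 1 / (Real.exp ε + 1) + ρ < Real.exp (ε * t) * (prefixSum q m k + ρ) :=
      (div_lt_iff₀ hsρ).1 h4
    have h6 : min (1 / (Real.exp ε + 1)) (Real.exp (ε * t) * (prefixSum q m k + ρ) - ρ)
        = 1 / (Real.exp ε + 1) := min_eq_left (by linarith)
    have := hlb t
    rw [h6] at this
    exact this
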